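/- Let p be a prime, let G be a group with subgroups A and B, let φ : A → B be an isomorphism, and let G* = (G, t; t⁻¹At = B, φ) be the corresponding HNN-extension. If N is a normal subgroup of G* of finite p-power index and M = G ∩ N, then M is an (A,B,φ,p)-compatible subgroup of G. -/

import Mathlib

/-- A group `X` is *residually a finite p-group* if every non-identity element is excluded
by some normal subgroup of `p`-power index (equivalently, survives in some finite `p`-group
quotient). -/
def ResiduallyPGroup (p : ℕ) (X : Type*) [Group X] : Prop :=
  ∀ x : X, x ≠ 1 → ∃ N : Subgroup X, N.Normal ∧ x ∉ N ∧ ∃ k : ℕ, N.index = p ^ k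

/-- A subgroup `H` of `G` is `(A,B,φ)`-compatible if `φ(A ∩ H) = B ∩ H`. -/
def Compatible {G : Type*} [Group G] {A B : Subgroup G} (φ : A ≃* B) (H : Subgroup G) : Prop :=
  (H.subgroupOf A).map φ.toMonoidHom = H.subgroupOf B

/-- A subgroup `H` of `G` is `(A,B,φ,p)`-compatible if there is a chain
`H = G₀ ≤ G₁ ≤ ⋯ ≤ Gₙ = G` of normal `(A,B,φ)`-compatible subgroups of `G` in which every
quotient `Gᵢ₊₁/Gᵢ` has order `p` and `φ(a) ≡ a (mod Gᵢ)` for every `a ∈ A ∩ Gᵢ₊₁`. -/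
def PCompatible (p : ℕ) {G : Type*} [Group G] {A B : Subgroup G} (φ : A ≃* B)
    (H : Subgroup G) : Prop :=
  ∃ (n : ℕ) (Gs : Fin (n + 1) → Subgroup G),
    Gs 0 = H ∧ Gs (Fin.last n) = ⊤ ∧ Monotone Gs ∧
    (∀ i, (Gs i).Normal ∧ Compatible φ (Gs i)) ∧
    (∀ i : Fin n, (Gs i.castSucc).relIndex (Gs i.succ) = p ∧
      ∀ a : A, (a : G) ∈ Gs i.succ → (φ a : G) * (a : G)⁻¹ ∈ Gs i.castSucc)

/-!
Induct on the exponent of `[G* : N]`. The finite `p`-group `G*/N` has a central subgroup of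
order `p`; its preimage `N'` is normal of index `[G* : N]/p` with `⁅G*, N'⁆ ≤ N`, so by induction
`G ∩ N'` is `(A,B,φ,p)`-compatible. Then `G ∩ N` has index `1` or `p` in `G ∩ N'`, and in the
latter case it extends the chain by one step: since `φ(a) = t a t⁻¹`, the element
`φ(a) a⁻¹ = ⁅t, a⁆` lies in `N` for every `a ∈ A ∩ N'`.
-/

open Subgroup

theorem IsPGroup.exists_mem_center_orderOf_eq {p : ℕ} [Fact p.Prime] {Q : Type*} [Group Q]
    [Finite Q] [Nontrivial Q] (hQ : IsPGroup p Q) : ∃ z ∈ center Q, orderOf z = p := by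
  have := hQ.center_nontrivial
  obtain ⟨n, hn, hcard⟩ := (hQ.to_subgroup (center Q)).nontrivial_iff_card.mp this
  obtain ⟨z, hz⟩ := exists_prime_orderOf_dvd_card' p (hcard ▸ dvd_pow_self p hn.ne')
  exact ⟨z, z.2, by rwa [orderOf_coe]⟩

namespace Subgroup

variable {X Y : Type*} [Group X] [Group Y]

theorem relIndex_dvd_relIndex_of_le_right {H K L : Subgroup X} [H.Normal] (hKL : K ≤ L) :
    H.relIndex K ∣ H.relIndex L := by
  rw [← QuotientGroup.ker_mk' H, relIndex_ker, relIndex_ker]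
  exact card_dvd_of_le (map_mono hKL)

theorem relIndex_comap_dvd (f : Y →* X) (H K : Subgroup X) [H.Normal] :
    (H.comap f).relIndex (K.comap f) ∣ H.relIndex K := by
  rw [relIndex_comap]
  exact relIndex_dvd_relIndex_of_le_right (map_comap_le f K)

theorem exists_normal_relIndex_eq_commutator_le {p k : ℕ} [hp : Fact p.Prime]
    (N : Subgroup X) [N.Normal] (hN : N.index = p ^ (k + 1)) :
    ∃ N' : Subgroup X, N'.Normal ∧ N ≤ N' ∧ N'.index = p ^ k ∧ N.relIndex N' = p ∧
      ⁅(⊤ : Subgroup X), N'⁆ ≤ N := by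
  have hcard : Nat.card (X ⧸ N) = p ^ (k + 1) := hN
  have : Finite (X ⧸ N) := Nat.finite_of_card_ne_zero (hcard ▸ pow_ne_zero _ hp.out.ne_zero)
  have : Nontrivial (X ⧸ N) := by
    rw [← Finite.one_lt_card_iff_nontrivial, hcard]
    exact Nat.one_lt_pow k.succ_ne_zero hp.out.one_lt
  obtain ⟨z, hz, hzp⟩ := (IsPGroup.of_card hcard).exists_mem_center_orderOf_eq
  have hZ : zpowers z ≤ center (X ⧸ N) := zpowers_le.mpr hz
  have : (zpowers z).Normal :=
    ⟨fun y hy g => by rwa [mem_center_iff.mp (hZ hy) g, mul_inv_cancel_right]⟩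
  have hle : N ≤ (zpowers z).comap (QuotientGroup.mk' N) :=
    (QuotientGroup.ker_mk' N).ge.trans (MonoidHom.ker_le_comap _ _)
  have hidx : ((zpowers z).comap (QuotientGroup.mk' N)).index = p ^ k := by
    have h := (zpowers z).card_mul_index
    rw [Nat.card_zpowers, hzp, hcard, pow_succ'] at h
    rw [index_comap_of_surjective _ (QuotientGroup.mk'_surjective N)]
    exact Nat.eq_of_mul_eq_mul_left hp.out.pos h
  refine ⟨_, inferInstance, hle, hidx, ?_, ?_⟩
  · have h := relIndex_mul_index hle
    rw [hidx, hN, pow_succ'] at h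
    exact Nat.eq_of_mul_eq_mul_right (pow_pos hp.out.pos k) h
  · rw [commutator_le]
    rintro g - y hy
    rw [← QuotientGroup.eq_one_iff, ← QuotientGroup.mk'_apply, map_commutatorElement,
      commutatorElement_eq_one_iff_mul_comm]
    exact mem_center_iff.mp (hZ hy) _

end Subgroup

section Compatible

variable {G : Type*} [Group G] {A B : Subgroup G} (φ : A ≃* B)

theorem compatible_top : Compatible φ ⊤ := by
  rw [Compatible, top_subgroupOf, top_subgroupOf]
  exact map_top_of_surjective _ φ.surjective

theorem pCompatible_top (p : ℕ) : PCompatible p φ ⊤ :=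
  ⟨0, fun _ => ⊤, rfl, rfl, monotone_const, fun _ => ⟨inferInstance, compatible_top φ⟩,
    Fin.elim0⟩

variable {φ}

theorem PCompatible.of_step {p : ℕ} {H K : Subgroup G} (hK : PCompatible p φ K) (hHK : H ≤ K)
    [hH : H.Normal] (hc : Compatible φ H) (hidx : H.relIndex K = p)
    (hφ : ∀ a : A, (a : G) ∈ K → (φ a : G) * (a : G)⁻¹ ∈ H) : PCompatible p φ H := by
  obtain ⟨n, Gs, rfl, hlast, hmono, hnc, hstep⟩ := hK
  refine ⟨n + 1, Fin.cons H Gs, rfl, by rwa [← Fin.succ_last, Fin.cons_succ], ?_, ?_, ?_⟩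
  · rw [Fin.monotone_iff_le_succ, Fin.forall_fin_succ]
    refine ⟨hHK, fun i => ?_⟩
    simpa only [← Fin.succ_castSucc, Fin.cons_succ] using hmono (Fin.castSucc_le_succ i)
  · rw [Fin.forall_fin_succ]
    exact ⟨⟨hH, hc⟩, fun i => hnc i⟩
  · rw [Fin.forall_fin_succ]
    refine ⟨⟨hidx, hφ⟩, fun i => ?_⟩
    simpa only [← Fin.succ_castSucc, Fin.cons_succ] using hstep i

end Compatible

namespace HNNExtension

variable {G : Type*} [Group G] {A B : Subgroup G} {φ : A ≃* B}

theorem compatible_comap_of (N : Subgroup (HNNExtension G A B φ)) [hN : N.Normal] :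
    Compatible φ (N.comap of) := by
  ext b
  rw [mem_map_equiv]
  simp only [mem_subgroupOf, mem_comap]
  rw [equiv_symm_eq_conj, mul_assoc, hN.mem_comm_iff, mul_inv_cancel_right]

theorem equiv_mul_inv_mem_of_commutator_le {N N' : Subgroup (HNNExtension G A B φ)}
    (hcomm : ⁅(⊤ : Subgroup (HNNExtension G A B φ)), N'⁆ ≤ N) (a : A)
    (ha : (a : G) ∈ N'.comap of) : (φ a : G) * (a : G)⁻¹ ∈ N.comap of := by
  rw [mem_comap, map_mul, map_inv, equiv_eq_conj, ← commutatorElement_def]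
  exact hcomm (commutator_mem_commutator (mem_top t) ha)

theorem pCompatible_comap_of_commutator_le {p : ℕ} (hp : p.Prime)
    {N N' : Subgroup (HNNExtension G A B φ)} [N.Normal] (hle : N ≤ N')
    (hidx : N.relIndex N' = p) (hcomm : ⁅(⊤ : Subgroup (HNNExtension G A B φ)), N'⁆ ≤ N)
    (hN' : PCompatible p φ (N'.comap of)) : PCompatible p φ (N.comap of) := by
  have hdvd := relIndex_comap_dvd of N N'
  rw [hidx] at hdvd
  rcases hp.eq_one_or_self_of_dvd _ hdvd with h1 | hp'
  · rwa [le_antisymm (comap_mono hle) (relIndex_eq_one.mp h1)]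
  · exact hN'.of_step (comap_mono hle) (compatible_comap_of N) hp'
      (equiv_mul_inv_mem_of_commutator_le hcomm)

end HNNExtension

/-- **Lemma 2.2 (b).** If `N` is a normal subgroup of the HNN-extension
`G* = (G, t; t⁻¹At = B, φ)` of finite `p`-power index and `M = G ∩ N` (the preimage of `N`
under the canonical embedding `G →* G*`), then `M` is an `(A,B,φ,p)`-compatible subgroup
of `G`. -/
theorem pCompatible_of_comap_normal_p_power_index
    (p : ℕ) (hp : p.Prime) (G : Type*) [Group G] (A B : Subgroup G) (φ : A ≃* B)
    (N : Subgroup (HNNExtension G A B φ)) (hN : N.Normal)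
    (hidx : ∃ k : ℕ, N.index = p ^ k) :
    PCompatible p φ (N.comap (HNNExtension.of : G →* HNNExtension G A B φ)) := by
  have : Fact p.Prime := ⟨hp⟩
  obtain ⟨k, hk⟩ := hidx
  induction k generalizing N with
  | zero =>
    rw [pow_zero, index_eq_one] at hk
    rw [hk, comap_top]
    exact pCompatible_top φ p
  | succ k ih =>
    obtain ⟨N', hN', hle, hk', hrel, hcomm⟩ := N.exists_normal_relIndex_eq_commutator_le hk
    exact HNNExtension.pCompatible_comap_of_commutator_le hp hle hrel hcomm (ih N' hN' hk')
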